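/- arXiv:1704.07701 — 2 statements merged into one kernel-verified Lean document; each statement's English description precedes it below -/
import Mathlib

section
/- Let p be an odd prime, ψ the standard additive character of ℚ_p, u ∈ ℤ_p^×, and t ∈ ℤ_p with p-adic valuation v(t) = 1. Then ∫_{ℤ_p} ψ(u y²/t) dy = ∫_{ℤ_p^×} (y/p) ψ(u y/t) dy, where (·/p) denotes the Legendre symbol applied to the reduction mod p, and the Haar measure gives ℤ_p mass 1. -/
open MeasureTheory Complex

/-- The standard additive character of `ℚ_p`. -/
def IsStdChar (p : ℕ) [Fact (Nat.Prime p)] (ψ : ℚ_[p] → ℂ) : Prop :=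
  (∀ x y : ℚ_[p], ψ (x + y) = ψ x * ψ y) ∧
  ∀ (x : ℚ_[p]) (m : ℤ) (k : ℕ), ‖x - (m : ℚ_[p]) / (p : ℚ_[p]) ^ k‖ ≤ 1 →
    ψ x = Complex.exp (2 * Real.pi * Complex.I * ((m : ℂ) / (p : ℂ) ^ k))

/-- The reduction mod `p` of a `p`-adic number of norm at most one. -/
noncomputable def padicRes (p : ℕ) [Fact (Nat.Prime p)] (y : ℚ_[p]) : ZMod p :=
  if h : ‖y‖ ≤ 1 then PadicInt.toZMod (⟨y, h⟩ : ℤ_[p]) else 0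

open Finset in
lemma aux_sum_sq (p : ℕ) [Fact (Nat.Prime p)] (hp : p ≠ 2) (F : ZMod p → ℂ) :
    ∑ a : ZMod p, F (a ^ 2)
      = ∑ b : ZMod p, ((quadraticChar (ZMod p) b : ℤ) : ℂ) * F b + ∑ b : ZMod p, F b := by
  classical
  have hchar : ringChar (ZMod p) ≠ 2 := by
    rw [ZMod.ringChar_zmod_n]; exact hp
  have key : ∀ b : ZMod p,
      ({x : ZMod p | x ^ 2 = b}.toFinset.card : ℂ) = ((quadraticChar (ZMod p) b : ℤ) : ℂ) + 1 := by
    intro b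
    have := quadraticChar_card_sqrts hchar b
    exact_mod_cast congrArg (fun z : ℤ => (z : ℂ)) this
  calc ∑ a : ZMod p, F (a ^ 2)
      = ∑ b : ZMod p, ∑ a ∈ univ.filter (fun a : ZMod p => a ^ 2 = b), F (a ^ 2) :=
        (Finset.sum_fiberwise univ (fun a : ZMod p => a ^ 2) (fun a => F (a ^ 2))).symm
    _ = ∑ b : ZMod p, (({x : ZMod p | x ^ 2 = b}.toFinset.card : ℂ)) * F b := by
        refine Finset.sum_congr rfl fun b _ => ?_
        rw [Set.toFinset_setOf]
        have : ∑ a ∈ univ.filter (fun a : ZMod p => a ^ 2 = b), F (a ^ 2)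
            = ∑ _a ∈ univ.filter (fun a : ZMod p => a ^ 2 = b), F b :=
          Finset.sum_congr rfl fun a ha => by rw [(Finset.mem_filter.mp ha).2]
        rw [this, Finset.sum_const, nsmul_eq_mul]
    _ = ∑ b : ZMod p, (((quadraticChar (ZMod p) b : ℤ) : ℂ) + 1) * F b := by
        refine Finset.sum_congr rfl fun b _ => ?_; rw [key b]
    _ = _ := by
        rw [← Finset.sum_add_distrib]
        exact Finset.sum_congr rfl fun b _ => by ring

lemma aux_sum_zero (p : ℕ) [Fact (Nat.Prime p)]
    (ψ : ℚ_[p] → ℂ) (hψ : IsStdChar p ψ)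
    (u : ℚ_[p]) (hu : ‖u‖ = 1)
    (t : ℚ_[p]) (ht0 : t ≠ 0) (htv : t.valuation = 1) :
    ∑ b : ZMod p, ψ (u * ((b.val : ℚ_[p])) / t) = 0 := by
  classical
  have hprime : p.Prime := Fact.out
  have hp1 : 1 < p := hprime.one_lt
  have hpR : (0:ℝ) < p := by exact_mod_cast hprime.pos
  have hpQ : ((p : ℚ_[p])) ≠ 0 := by exact_mod_cast hprime.ne_zero
  have htn : ‖t‖ = ((p:ℝ))⁻¹ := by
    rw [Padic.norm_eq_zpow_neg_valuation ht0, htv]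
    simp
  set r : ℚ_[p] := u * p / t with hr_def
  have hrn : ‖r‖ = 1 := by
    rw [hr_def, norm_div, norm_mul, hu, Padic.norm_p, htn, one_mul, div_self]
    positivity
  have hr1 : ‖r‖ ≤ 1 := le_of_eq hrn
  set R : ℤ_[p] := ⟨r, hr1⟩ with hR_def
  set e : ZMod p := PadicInt.toZMod R with he_def
  have he : e ≠ 0 := by
    intro h
    have hker : R ∈ IsLocalRing.maximalIdeal ℤ_[p] := by
      rw [← PadicInt.ker_toZMod]; exact h
    have : ‖R‖ < 1 := by
      rwa [PadicInt.maximalIdeal_eq_span_p, Ideal.mem_span_singleton,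
        ← PadicInt.norm_lt_one_iff_dvd] at hker
    rw [show ‖R‖ = ‖r‖ from rfl] at this
    rw [hrn] at this; exact lt_irrefl 1 this
  have key : ∀ b : ZMod p, ψ (u * ((b.val : ℚ_[p])) / t)
      = Complex.exp (2 * Real.pi * Complex.I * ((((e * b).val : ℤ) : ℂ) / (p : ℂ) ^ (1:ℕ))) := by
    intro b
    apply hψ.2
    have hx : u * ((b.val : ℚ_[p])) / t = r * (b.val : ℚ_[p]) / p := by
      field_simp [hr_def]
      rw [hr_def]; field_simp
    rw [hx]
    have hz : ‖r * (b.val : ℚ_[p]) - (((e*b).val : ℤ) : ℚ_[p])‖ ≤ ((p:ℝ))⁻¹ := by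
      set z : ℤ_[p] := R * ((b.val : ℕ) : ℤ_[p]) - (((e*b).val : ℕ) : ℤ_[p]) with hz_def
      have hzker : PadicInt.toZMod z = 0 := by
        rw [hz_def]
        push_cast [map_sub, map_mul, map_natCast]
        simp [← he_def, ZMod.natCast_val, ZMod.cast_id]
      have hzmem : z ∈ IsLocalRing.maximalIdeal ℤ_[p] := by
        rw [← PadicInt.ker_toZMod]; exact hzker
      have hzlt : ‖z‖ < 1 := by
        rwa [PadicInt.maximalIdeal_eq_span_p, Ideal.mem_span_singleton,
          ← PadicInt.norm_lt_one_iff_dvd] at hzmem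
      have hcoe : ((z : ℚ_[p])) = r * (b.val : ℚ_[p]) - (((e*b).val : ℤ) : ℚ_[p]) := by
        push_cast [hz_def]
        rfl
      rw [← hcoe]
      have : ‖(z : ℚ_[p])‖ < 1 := by rwa [PadicInt.norm_def] at hzlt
      have h2 : ‖(z : ℚ_[p])‖ ≤ (p:ℝ) ^ (-1 : ℤ) := by
        rw [Padic.norm_le_pow_iff_norm_lt_pow_add_one]
        simpa using this
      simpa using h2
    have : r * (b.val : ℚ_[p]) / (p:ℚ_[p]) - (((e*b).val : ℤ) : ℚ_[p]) / (p : ℚ_[p]) ^ (1:ℕ)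
        = (r * (b.val : ℚ_[p]) - (((e*b).val : ℤ) : ℚ_[p])) / p := by
      rw [pow_one]; ring
    rw [this, norm_div, Padic.norm_p]
    rw [div_le_one (by positivity)] at *
    calc ‖r * ↑b.val - ((((e*b).val : ℤ)) : ℚ_[p])‖ ≤ ((p:ℝ))⁻¹ := hz
      _ = (p:ℝ)⁻¹ := rfl
  haveI : NeZero p := ⟨hprime.ne_zero⟩
  set ζ : ℂ := Complex.exp (2 * Real.pi * Complex.I / p) with hζ_def
  have hexp : ∀ n : ℕ, Complex.exp (2 * Real.pi * Complex.I * ((n:ℂ) / (p : ℂ) ^ (1:ℕ))) = ζ ^ n := by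
    intro n
    rw [hζ_def, ← Complex.exp_nat_mul]
    congr 1
    rw [pow_one]; ring
  calc ∑ b : ZMod p, ψ (u * ((b.val : ℚ_[p])) / t)
      = ∑ b : ZMod p, ζ ^ ((e * b).val) := by
        refine Finset.sum_congr rfl fun b _ => ?_
        rw [key b]
        simpa using hexp ((e * b).val)
    _ = ∑ c : ZMod p, ζ ^ (c.val) := by
        exact Fintype.sum_bijective (fun b => e * b) (Equiv.mulLeft₀ e he).bijective _ _
          (fun b => rfl)
    _ = ∑ i ∈ Finset.range p, ζ ^ i := by
        refine Finset.sum_nbij' (fun c : ZMod p => c.val) (fun i : ℕ => (i : ZMod p))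
          ?_ ?_ ?_ ?_ ?_
        · intro a _; exact Finset.mem_range.mpr (ZMod.val_lt a)
        · intro i _; exact Finset.mem_univ _
        · intro a _; simp [ZMod.natCast_val, ZMod.cast_id]
        · intro i hi; exact ZMod.val_cast_of_lt (Finset.mem_range.mp hi)
        · intro a _; rfl
    _ = 0 := (Complex.isPrimitiveRoot_exp p hprime.ne_zero).geom_sum_eq_zero hp1

theorem statement_1 (p : ℕ) [Fact (Nat.Prime p)] (hp : p ≠ 2)
    [MeasurableSpace ℚ_[p]] [BorelSpace ℚ_[p]]
    (μ : Measure ℚ_[p]) [μ.IsAddLeftInvariant]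
    (hμ : μ {x : ℚ_[p] | ‖x‖ ≤ 1} = 1)
    (ψ : ℚ_[p] → ℂ) (hψ : IsStdChar p ψ)
    (u : ℚ_[p]) (hu : ‖u‖ = 1)
    (t : ℚ_[p]) (ht : ‖t‖ ≤ 1) (ht0 : t ≠ 0) (htv : t.valuation = 1) :
    ∫ y in {y : ℚ_[p] | ‖y‖ ≤ 1}, ψ (u * y ^ 2 / t) ∂μ
      = ∫ y in {y : ℚ_[p] | ‖y‖ = 1},
          ((quadraticChar (ZMod p) (padicRes p y) : ℤ) : ℂ) * ψ (u * y / t) ∂μ := by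
  classical
  have hprime : p.Prime := Fact.out
  haveI : NeZero p := ⟨hprime.ne_zero⟩
  have hp1 : 1 < p := hprime.one_lt
  have hpR : (0:ℝ) < p := by exact_mod_cast hprime.pos
  have hpinv1 : ((p:ℝ))⁻¹ < 1 := by
    rw [inv_lt_one_iff₀]; right; exact_mod_cast hp1
  have htn : ‖t‖ = ((p:ℝ))⁻¹ := by
    rw [Padic.norm_eq_zpow_neg_valuation ht0, htv]; simp
  set S : Set ℚ_[p] := {y : ℚ_[p] | ‖y‖ ≤ 1} with hS_def
  set U : Set ℚ_[p] := {y : ℚ_[p] | ‖y‖ = 1} with hU_def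
  set C : ZMod p → Set ℚ_[p] :=
    fun a => {y : ℚ_[p] | ‖y - ((a.val : ℚ_[p]))‖ ≤ ((p:ℝ))⁻¹} with hC_def
  set F : ZMod p → ℂ := fun b => ψ (u * ((b.val : ℚ_[p])) / t) with hF_def
  set χ : ZMod p → ℂ := fun b => ((quadraticChar (ZMod p) b : ℤ) : ℂ) with hχ_def
  -- small norm facts
  have hlt_iff : ∀ x : ℚ_[p], ‖x‖ ≤ ((p:ℝ))⁻¹ ↔ ‖x‖ < 1 := by
    intro x
    have := Padic.norm_le_pow_iff_norm_lt_pow_add_one x (-1)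
    simpa using this
  have hnat_le : ∀ n : ℕ, ‖((n : ℚ_[p]))‖ ≤ 1 := by
    intro n
    have := Padic.norm_int_le_one (p := p) (n : ℤ)
    simpa using this
  -- measurability of the sets
  have hSmeas : MeasurableSet S := by
    have : S = Metric.closedBall (0 : ℚ_[p]) 1 := by
      ext y; simp [hS_def, Metric.mem_closedBall, dist_eq_norm]
    rw [this]; exact measurableSet_closedBall
  have hUmeas : MeasurableSet U := by
    have : U = (fun y : ℚ_[p] => ‖y‖) ⁻¹' {1} := by
      ext y; simp [hU_def]
    rw [this]
    exact measurable_norm (measurableSet_singleton (1:ℝ))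
  have hCmeas : ∀ a : ZMod p, MeasurableSet (C a) := by
    intro a
    have : C a = Metric.closedBall ((a.val : ℚ_[p])) ((p:ℝ))⁻¹ := by
      ext y; simp [hC_def, Metric.mem_closedBall, dist_eq_norm]
    rw [this]; exact measurableSet_closedBall
  -- membership in one's own coset
  have hres : ∀ y : ℚ_[p], ‖y‖ ≤ 1 → y ∈ C (padicRes p y) := by
    intro y hy
    have hrdef : padicRes p y = PadicInt.toZMod (⟨y, hy⟩ : ℤ_[p]) := dif_pos hy
    set Y : ℤ_[p] := (⟨y, hy⟩ : ℤ_[p]) with hY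
    have hspec := PadicInt.toZMod_spec Y
    rw [PadicInt.maximalIdeal_eq_span_p, Ideal.mem_span_singleton,
      ← PadicInt.norm_lt_one_iff_dvd] at hspec
    have hcast : (ZMod.cast (PadicInt.toZMod Y) : ℤ_[p])
        = (((PadicInt.toZMod Y).val : ℕ) : ℤ_[p]) := (ZMod.natCast_val _).symm
    rw [hcast, PadicInt.norm_def] at hspec
    have hcoe : (((Y - (((PadicInt.toZMod Y).val : ℕ) : ℤ_[p])) : ℤ_[p]) : ℚ_[p])
        = y - (((PadicInt.toZMod Y).val : ℕ) : ℚ_[p]) := by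
      push_cast
      rfl
    rw [hcoe] at hspec
    simp only [hC_def, Set.mem_setOf_eq, hrdef]
    exact (hlt_iff _).mpr hspec
  -- cosets are disjoint
  have hdisj : ∀ a b : ZMod p, a ≠ b → ∀ y, y ∈ C a → y ∈ C b → False := by
    intro a b hab y hya hyb
    have h1 : ‖((a.val : ℚ_[p])) - ((b.val : ℚ_[p]))‖ < 1 := by
      have heq : ((a.val : ℚ_[p])) - ((b.val : ℚ_[p]))
          = (y - ((b.val : ℚ_[p]))) - (y - ((a.val : ℚ_[p]))) := by ring
      rw [heq]
      have hna := Padic.nonarchimedean (p := p) (y - ((b.val : ℚ_[p])))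
        (-(y - ((a.val : ℚ_[p]))))
      have h2 : ‖(y - ((b.val : ℚ_[p]))) - (y - ((a.val : ℚ_[p])))‖
          ≤ max ‖y - ((b.val : ℚ_[p]))‖ ‖y - ((a.val : ℚ_[p]))‖ := by
        rwa [← sub_eq_add_neg, norm_neg] at hna
      exact lt_of_le_of_lt (h2.trans (max_le_max hyb hya)) (by simpa using hpinv1)
    have hdvd : (p : ℤ) ∣ ((a.val : ℤ) - (b.val : ℤ)) := by
      rw [← Padic.norm_intCast_lt_one_iff]
      push_cast
      exact h1
    apply hab
    have hz : (((a.val : ℤ) - (b.val : ℤ) : ℤ) : ZMod p) = 0 :=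
      (ZMod.intCast_zmod_eq_zero_iff_dvd _ _).mpr hdvd
    have h3 : (a : ZMod p) - b = 0 := by
      push_cast at hz
      simpa [ZMod.natCast_val, ZMod.cast_id] using hz
    linear_combination h3
  -- coset inclusion in S
  have hCS : ∀ a : ZMod p, C a ⊆ S := by
    intro a y hy
    have h := Padic.nonarchimedean (p := p) (y - ((a.val : ℚ_[p]))) ((a.val : ℚ_[p]))
    have h2 : ‖y‖ ≤ max ‖y - ((a.val : ℚ_[p]))‖ ‖((a.val : ℚ_[p]))‖ := by
      simpa using h
    exact h2.trans (max_le (le_trans hy hpinv1.le) (hnat_le _))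
  -- nonzero cosets lie in the unit sphere
  have hCU : ∀ a : ZMod p, a ≠ 0 → C a ⊆ U := by
    intro a ha y hy
    have hval_ne : a.val ≠ 0 := fun h0 => ha (by
      have := congrArg (fun n : ℕ => ((n : ZMod p))) h0
      simpa [ZMod.natCast_val, ZMod.cast_id] using this)
    have hvne : ¬ (p : ℤ) ∣ (a.val : ℤ) := by
      intro hdvd
      have hnd : (p : ℕ) ∣ a.val := Int.ofNat_dvd.mp (by exact_mod_cast hdvd)
      have hlt := ZMod.val_lt a
      exact absurd (Nat.le_of_dvd (Nat.pos_of_ne_zero hval_ne) hnd) (not_le.mpr hlt)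
    have hnorm1 : ‖((a.val : ℚ_[p]))‖ = 1 := by
      have hle := hnat_le a.val
      rcases lt_or_eq_of_le hle with hlt | heq
      · exfalso
        apply hvne
        rw [← Padic.norm_intCast_lt_one_iff]
        push_cast
        exact hlt
      · exact heq
    have hne : ‖((a.val : ℚ_[p]))‖ ≠ ‖y - ((a.val : ℚ_[p]))‖ := by
      rw [hnorm1]
      intro h
      have hlt := lt_of_le_of_lt hy hpinv1
      rw [← h] at hlt
      exact lt_irrefl (1:ℝ) hlt
    have hmax : ‖((a.val : ℚ_[p])) + (y - ((a.val : ℚ_[p])))‖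
        = max ‖((a.val : ℚ_[p]))‖ ‖y - ((a.val : ℚ_[p]))‖ :=
      Padic.add_eq_max_of_ne hne
    have hsimp : ((a.val : ℚ_[p])) + (y - ((a.val : ℚ_[p]))) = y := by ring
    rw [hsimp] at hmax
    show ‖y‖ = 1
    rw [hmax, hnorm1]
    exact max_eq_left (le_trans hy hpinv1.le)
  -- the measures of the cosets agree
  have hμC : ∀ a : ZMod p, μ (C a) = μ (C 0) := by
    intro a
    have hpre : C a = (fun y => (-((a.val : ℚ_[p]))) + y) ⁻¹' (C 0) := by
      ext y
      simp only [hC_def, Set.mem_preimage, Set.mem_setOf_eq]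
      have : -((a.val : ℚ_[p])) + y - (((0 : ZMod p).val : ℚ_[p])) = y - ((a.val : ℚ_[p])) := by
        simp [ZMod.val_zero]
        ring
      rw [this]
    rw [hpre]
    exact measure_preimage_add μ _ _
  have hμfin : ∀ a : ZMod p, μ (C a) < ⊤ := by
    intro a
    have hmono := measure_mono (μ := μ) (hCS a)
    rw [show μ S = 1 from hμ] at hmono
    exact lt_of_le_of_lt hmono ENNReal.one_lt_top
  -- triviality of ψ on the integers
  have hψ1 : ∀ z : ℚ_[p], ‖z‖ ≤ 1 → ψ z = 1 := by
    intro z hz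
    have := hψ.2 z 0 0 (by simpa using hz)
    simpa using this
  have hψcongr : ∀ x x' : ℚ_[p], ‖x - x'‖ ≤ 1 → ψ x = ψ x' := by
    intro x x' h
    have hx : x = x' + (x - x') := by ring
    rw [hx, hψ.1, hψ1 _ h, mul_one]
  -- norm bound for the twisted argument
  have hbound : ∀ w : ℚ_[p], ‖w‖ ≤ ((p:ℝ))⁻¹ → ‖u * w / t‖ ≤ 1 := by
    intro w hw
    rw [norm_div, norm_mul, hu, one_mul, htn, div_le_one (by positivity)]
    simpa using hw
  -- constancy of the quadratic integrand on cosets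
  have hL : ∀ a : ZMod p, ∀ y ∈ C a, ψ (u * y ^ 2 / t) = F (a ^ 2) := by
    intro a y hy
    apply hψcongr
    have harg : u * y ^ 2 / t - u * (((a^2).val : ℚ_[p])) / t
        = u * (y ^ 2 - (((a^2).val : ℚ_[p]))) / t := by ring
    rw [harg]
    apply hbound
    have hsplit : y ^ 2 - (((a^2).val : ℚ_[p]))
        = (y - ((a.val : ℚ_[p]))) * (y + ((a.val : ℚ_[p])))
          + ((((a.val : ℚ_[p]))) ^ 2 - (((a^2).val : ℚ_[p]))) := by ring
    rw [hsplit]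
    have h1 : ‖(y - ((a.val : ℚ_[p]))) * (y + ((a.val : ℚ_[p])))‖ ≤ ((p:ℝ))⁻¹ := by
      rw [norm_mul]
      have hyS : ‖y‖ ≤ 1 := hCS a hy
      have hsum : ‖y + ((a.val : ℚ_[p]))‖ ≤ 1 :=
        (Padic.nonarchimedean _ _).trans (max_le hyS (hnat_le _))
      calc ‖y - ((a.val : ℚ_[p]))‖ * ‖y + ((a.val : ℚ_[p]))‖
          ≤ ((p:ℝ))⁻¹ * 1 := mul_le_mul hy hsum (norm_nonneg _) (by positivity)
        _ = ((p:ℝ))⁻¹ := mul_one _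
    have h2 : ‖(((a.val : ℚ_[p]))) ^ 2 - (((a^2).val : ℚ_[p]))‖ ≤ ((p:ℝ))⁻¹ := by
      rw [hlt_iff]
      have hcast : (((a.val : ℚ_[p]))) ^ 2 - (((a^2).val : ℚ_[p]))
          = ((((a.val : ℤ)) ^ 2 - (((a^2).val : ℤ)) : ℤ) : ℚ_[p]) := by push_cast; ring
      rw [hcast, Padic.norm_intCast_lt_one_iff]
      rw [← ZMod.intCast_zmod_eq_zero_iff_dvd]
      push_cast
      simp [ZMod.natCast_val, ZMod.cast_id]
    exact (Padic.nonarchimedean _ _).trans (max_le h1 h2)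
  -- constancy of the linear integrand on cosets
  have hR : ∀ a : ZMod p, ∀ y ∈ C a, ψ (u * y / t) = F a := by
    intro a y hy
    apply hψcongr
    have harg : u * y / t - u * ((a.val : ℚ_[p])) / t
        = u * (y - ((a.val : ℚ_[p]))) / t := by ring
    rw [harg]
    exact hbound _ hy
  -- the residue of a point in a coset
  have hresC : ∀ a : ZMod p, ∀ y ∈ C a, padicRes p y = a := by
    intro a y hy
    by_contra hne
    exact hdisj _ _ hne y (hres y (hCS a hy)) hy
  -- integrability of coset indicators
  have hint : ∀ (T : Set ℚ_[p]) (c : ℂ) (a : ZMod p),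
      Integrable ((C a).indicator (fun _ => c)) (μ.restrict T) := by
    intro T c a
    rw [integrable_indicator_iff (hCmeas a)]
    refine (integrableOn_const_iff).mpr (Or.inr ?_)
    calc (μ.restrict T) (C a) ≤ μ (C a) := Measure.restrict_le_self _
      _ < ⊤ := hμfin a
  -- value of coset-indicator integrals
  have hival : ∀ (T : Set ℚ_[p]) (_ : MeasurableSet T) (c : ℂ) (a : ZMod p),
      ∫ y in T, (C a).indicator (fun _ => c) y ∂μ = (μ (T ∩ C a)).toReal • c := by
    intro T hT c a
    rw [setIntegral_indicator (hCmeas a)]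
    exact setIntegral_const c
  -- LHS as a sum
  have hLHS : ∫ y in S, ψ (u * y ^ 2 / t) ∂μ
      = ∑ a : ZMod p, (μ (C 0)).toReal • F (a ^ 2) := by
    have heq : ∀ y ∈ S, ψ (u * y ^ 2 / t)
        = ∑ a : ZMod p, (C a).indicator (fun _ => F (a ^ 2)) y := by
      intro y hy
      have hyb : y ∈ C (padicRes p y) := hres y hy
      rw [Finset.sum_eq_single (padicRes p y)]
      · rw [Set.indicator_of_mem hyb]
        exact hL _ y hyb
      · intro a _ hne
        refine Set.indicator_of_notMem (fun hmem => ?_) _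
        exact hdisj _ _ (fun h => hne h.symm) y hyb hmem
      · intro h; exact absurd (Finset.mem_univ _) h
    calc ∫ y in S, ψ (u * y ^ 2 / t) ∂μ
        = ∫ y in S, (∑ a : ZMod p, (C a).indicator (fun _ => F (a ^ 2)) y) ∂μ :=
          setIntegral_congr_fun hSmeas heq
      _ = ∑ a : ZMod p, ∫ y in S, (C a).indicator (fun _ => F (a ^ 2)) y ∂μ :=
          integral_finset_sum _ (fun a _ => hint S _ a)
      _ = ∑ a : ZMod p, (μ (C 0)).toReal • F (a ^ 2) := by
          refine Finset.sum_congr rfl fun a _ => ?_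
          rw [hival S hSmeas _ a, Set.inter_eq_right.mpr (hCS a), hμC a]
  -- RHS as a sum
  have hRHS : ∫ y in U, ((quadraticChar (ZMod p) (padicRes p y) : ℤ) : ℂ) * ψ (u * y / t) ∂μ
      = ∑ a : ZMod p, (μ (C 0)).toReal • (χ a * F a) := by
    have heq : ∀ y ∈ U, ((quadraticChar (ZMod p) (padicRes p y) : ℤ) : ℂ) * ψ (u * y / t)
        = ∑ a : ZMod p, (C a).indicator (fun _ => χ a * F a) y := by
      intro y hy
      have hyS : ‖y‖ ≤ 1 := le_of_eq hy
      have hyb : y ∈ C (padicRes p y) := hres y hyS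
      rw [Finset.sum_eq_single (padicRes p y)]
      · rw [Set.indicator_of_mem hyb]
        rw [hR _ y hyb]
      · intro a _ hne
        refine Set.indicator_of_notMem (fun hmem => ?_) _
        exact hdisj _ _ (fun h => hne h.symm) y hyb hmem
      · intro h; exact absurd (Finset.mem_univ _) h
    calc ∫ y in U, ((quadraticChar (ZMod p) (padicRes p y) : ℤ) : ℂ) * ψ (u * y / t) ∂μ
        = ∫ y in U, (∑ a : ZMod p, (C a).indicator (fun _ => χ a * F a) y) ∂μ :=
          setIntegral_congr_fun hUmeas heq
      _ = ∑ a : ZMod p, ∫ y in U, (C a).indicator (fun _ => χ a * F a) y ∂μ :=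
          integral_finset_sum _ (fun a _ => hint U _ a)
      _ = ∑ a : ZMod p, (μ (C 0)).toReal • (χ a * F a) := by
          refine Finset.sum_congr rfl fun a _ => ?_
          rw [hival U hUmeas _ a]
          by_cases ha : a = 0
          · have hz : χ a = 0 := by
              rw [ha, hχ_def]; simp
            rw [hz]; simp
          · rw [Set.inter_eq_right.mpr (hCU a ha), hμC a]
  -- conclude via the character sum identities
  rw [hLHS, hRHS]
  rw [← Finset.smul_sum, ← Finset.smul_sum]
  congr 1
  have hsq := aux_sum_sq p hp F
  have hzero : ∑ b : ZMod p, F b = 0 := aux_sum_zero p ψ hψ u hu t ht0 htv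
  rw [hsq, hzero, add_zero]
end

section
/- Let p be an odd prime, ψ the standard additive character of ℚ_p, and u ∈ ℤ_p^×. For every t ∈ ℤ_p \ {0}, the complex number ∫_{ℤ_p} ψ(u y²/t) dy has absolute value |t|_p^{1/2}, and moreover ∫_{ℤ_p} ψ(u y²/t) dy = (u/p)^{v(t)} ∫_{ℤ_p} ψ(y²/t) dy, where (u/p) is the Legendre symbol of u mod p and v(t) is the p-adic valuation of t. -/
open MeasureTheory Complex

section GaussSums
open Finset

noncomputable def eC (q : ℚ) : ℂ := Complex.exp (2 * Real.pi * Complex.I * q)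

lemma eC_add (a b : ℚ) : eC (a + b) = eC a * eC b := by
  unfold eC; rw [← Complex.exp_add]; congr 1; push_cast; ring

lemma eC_int (m : ℤ) : eC m = 1 := by
  unfold eC
  rw [show ((2:ℂ) * Real.pi * Complex.I * ((m:ℚ):ℂ)) = (m:ℤ) * (2 * Real.pi * Complex.I) by push_cast; ring]
  exact Complex.exp_int_mul_two_pi_mul_I m

lemma eC_zero : eC 0 = 1 := by simpa using eC_int 0

lemma eC_nat_mul (m : ℕ) (a : ℚ) : eC (m * a) = eC a ^ m := by
  induction m with
  | zero => simpa using eC_zero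
  | succ k ih => push_cast; rw [add_mul, one_mul, eC_add, ih, pow_succ]

lemma eC_eq_one_iff_int (q : ℚ) : eC q = 1 ↔ ∃ m : ℤ, q = m := by
  unfold eC
  rw [Complex.exp_eq_one_iff]
  constructor
  · rintro ⟨m, hm⟩
    refine ⟨m, ?_⟩
    have h2 : (2 * (Real.pi:ℂ) * Complex.I : ℂ) ≠ 0 := by
      simp [Real.pi_ne_zero, Complex.I_ne_zero, Complex.ofReal_ne_zero]
    have hq : ((q:ℂ)) = m := by
      have : (2 * (Real.pi:ℂ) * Complex.I) * q = (2 * (Real.pi:ℂ) * Complex.I) * m := by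
        rw [hm]; ring
      exact mul_left_cancel₀ h2 this
    exact_mod_cast hq
  · rintro ⟨m, hm⟩; exact ⟨m, by rw [hm]; push_cast; ring⟩

noncomputable def Gs (c N : ℕ) : ℂ := ∑ r ∈ range N, eC ((c * r^2 : ℕ) / (N : ℚ))

lemma sum_range_mul_comp (a b : ℕ) (ha : 0 < a) (f : ℕ → ℂ) :
    ∑ r ∈ range (a * b), f r = ∑ s ∈ range a, ∑ k ∈ range b, f (s + a * k) := by
  rw [show (∑ s ∈ range a, ∑ k ∈ range b, f (s + a * k))
      = ∑ x ∈ range a ×ˢ range b, f (x.1 + a * x.2) from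
    (Finset.sum_product' (s := range a) (t := range b) (f := fun s k => f (s + a * k))).symm]
  refine Finset.sum_nbij' (fun r => (r % a, r / a)) (fun x => x.1 + a * x.2) ?_ ?_ ?_ ?_ ?_
  · intro r hr
    simp only [Finset.mem_range] at hr
    simp only [Finset.mem_product, Finset.mem_range]
    exact ⟨Nat.mod_lt _ ha, (Nat.div_lt_iff_lt_mul ha).2 (by rwa [mul_comm])⟩
  · intro x hx
    simp only [Finset.mem_product, Finset.mem_range] at hx
    simp only [Finset.mem_range]
    calc x.1 + a * x.2 < a + a * x.2 := by omega
    _ = a * (x.2 + 1) := by ring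
    _ ≤ a * b := Nat.mul_le_mul_left a hx.2
  · intro r _; simp [Nat.mod_add_div]
  · intro x hx
    simp only [Finset.mem_product, Finset.mem_range] at hx
    have h1 : (x.1 + a * x.2) % a = x.1 := by
      rw [Nat.add_mul_mod_self_left, Nat.mod_eq_of_lt hx.1]
    have h2 : (x.1 + a * x.2) / a = x.2 := by
      rw [Nat.add_mul_div_left _ _ ha, Nat.div_eq_of_lt hx.1, zero_add]
    simp [h1, h2]
  · intro r _; simp [Nat.mod_add_div]

lemma Gs_step (p c n : ℕ) (hp : p.Prime) (hp2 : p ≠ 2) (hc : ¬ p ∣ c) :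
    Gs c (p^(n+2)) = p * Gs c (p^n) := by
  have hp0 : 0 < p := hp.pos
  have hpQ : ((p:ℚ)) ≠ 0 := by exact_mod_cast hp0.ne'
  unfold Gs
  have hsplit : (p:ℕ)^(n+2) = p^(n+1) * p := by ring
  rw [hsplit, sum_range_mul_comp _ _ (pow_pos hp0 _)]
  have key : ∀ s k : ℕ, eC ((c * (s + p^(n+1) * k)^2 : ℕ) / ((p^(n+1) * p : ℕ) : ℚ))
      = eC ((c * s^2 : ℕ) / ((p^(n+1) * p : ℕ) : ℚ)) * eC ((2 * c * s : ℕ) / (p:ℚ)) ^ k := by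
    intro s k
    have harg : ((c * (s + p^(n+1) * k)^2 : ℕ) : ℚ) / ((p^(n+1) * p : ℕ) : ℚ)
        = ((c * s^2 : ℕ) : ℚ) / ((p^(n+1) * p : ℕ) : ℚ) + ((k * (2 * c * s) : ℕ) : ℚ) / (p:ℚ)
          + ((c * p^n * k^2 : ℕ) : ℚ) := by
      push_cast
      field_simp
      ring
    rw [harg, eC_add, eC_add, show ((c * p^n * k^2 : ℕ) : ℚ) = ((c * p^n * k^2 : ℕ) : ℤ) by push_cast; ring,
      eC_int, mul_one]
    congr 1
    rw [show ((k * (2 * c * s) : ℕ) : ℚ) / (p:ℚ) = (k:ℚ) * (((2 * c * s : ℕ) : ℚ) / (p:ℚ)) by push_cast; ring,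
      eC_nat_mul]
  simp only [key]
  have inner : ∀ s : ℕ, ∑ k ∈ range p, eC ((2 * c * s : ℕ) / (p:ℚ)) ^ k
      = if p ∣ s then (p:ℂ) else 0 := by
    intro s
    by_cases hs : p ∣ s
    · obtain ⟨d, rfl⟩ := hs
      have : ((2 * c * (p * d) : ℕ) : ℚ) / (p:ℚ) = ((2 * c * d : ℕ) : ℤ) := by push_cast; field_simp
      rw [this, eC_int]
      simp
    · have hz1 : eC ((2 * c * s : ℕ) / (p:ℚ)) ≠ 1 := by
        intro h
        rw [eC_eq_one_iff_int] at h
        obtain ⟨m, hm⟩ := h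
        field_simp at hm
        have hZ : ((2 * c * s : ℕ) : ℤ) = m * p := by exact_mod_cast hm.trans (mul_comm _ _)
        have hdvd : (p:ℤ) ∣ ((2 * c * s : ℕ) : ℤ) := ⟨m, by rw [hZ]; ring⟩
        have hdvd' : p ∣ 2 * c * s := by exact_mod_cast hdvd
        rcases (hp.dvd_mul.1 hdvd') with h1 | h1
        · rcases (hp.dvd_mul.1 h1) with h2 | h2
          · exact hp2 ((Nat.prime_dvd_prime_iff_eq hp Nat.prime_two).1 h2)
          · exact hc h2
        · exact hs h1
      rw [geom_sum_eq hz1, ← eC_nat_mul]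
      have : (p:ℚ) * (((2 * c * s : ℕ) : ℚ) / (p:ℚ)) = ((2 * c * s : ℕ) : ℤ) := by push_cast; field_simp
      rw [this, eC_int]
      simp [hs]
  simp only [← Finset.mul_sum, inner]
  simp only [mul_ite, mul_zero]
  rw [← Finset.sum_filter]
  rw [Finset.mul_sum]
  refine Finset.sum_nbij' (fun s => s / p) (fun m => p * m) ?_ ?_ ?_ ?_ ?_
  · intro s hs
    simp only [Finset.mem_filter, Finset.mem_range] at hs
    simp only [Finset.mem_range]
    exact (Nat.div_lt_iff_lt_mul hp0).2 (by calc s < p^(n+1) := hs.1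
                                                _ = p^n * p := by ring)
  · intro m hm
    simp only [Finset.mem_range] at hm
    simp only [Finset.mem_filter, Finset.mem_range]
    exact ⟨by calc p * m < p * p^n := (Nat.mul_lt_mul_left hp0).mpr hm
              _ = p^(n+1) := by ring, Dvd.intro m rfl⟩
  · intro s hs
    simp only [Finset.mem_filter] at hs
    exact Nat.mul_div_cancel' hs.2
  · intro m _
    exact Nat.mul_div_cancel_left m hp0
  · intro s hs
    simp only [Finset.mem_filter, Finset.mem_range] at hs
    obtain ⟨d, rfl⟩ := hs.2
    show eC (↑(c * (p * d) ^ 2) / ↑(p ^ (n + 1) * p)) * ↑p = ↑p * eC (↑(c * (p * d / p) ^ 2) / ↑(p ^ n))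
    rw [Nat.mul_div_cancel_left d hp0]
    rw [mul_comm (↑p : ℂ)]
    congr 1
    congr 1
    push_cast
    field_simp
    ring

lemma Gs_triv (c : ℕ) : Gs c 1 = 1 := by
  unfold Gs
  simp [eC_zero]

lemma Gs_prime (p : ℕ) [Fact (Nat.Prime p)] (hp2 : p ≠ 2) :
    (∀ c : ℕ, ¬ p ∣ c →
      Gs c p = ((quadraticChar (ZMod p) (c : ZMod p) : ℤ) : ℂ) * Gs 1 p) ∧
    ‖Gs 1 p‖ = Real.sqrt p := by
  have hp : Nat.Prime p := Fact.out
  haveI : NeZero p := ⟨hp.ne_zero⟩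
  have hpQ : ((p:ℚ)) ≠ 0 := by exact_mod_cast hp.ne_zero
  set ζ : ℂ := eC (1 / p) with hζdef
  have hζp : ζ ^ p = 1 := by
    rw [hζdef, ← eC_nat_mul]
    rw [show ((p:ℚ)) * (1 / p) = ((1:ℤ):ℚ) by field_simp; norm_num]
    exact eC_int 1
  set ψp : AddChar (ZMod p) ℂ := AddChar.zmodChar p hζp with hψdef
  have hprimroot : IsPrimitiveRoot ζ p := by
    have := Complex.isPrimitiveRoot_exp p hp.ne_zero
    convert this using 2
    rw [hζdef]
    unfold eC
    congr 1
    push_cast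
    ring
  have hψprim : ψp.IsPrimitive := AddChar.zmodChar_primitive_of_primitive_root p hprimroot
  set χ := quadraticChar (ZMod p) with hχdef
  set χ' : MulChar (ZMod p) ℂ := χ.ringHomComp (Int.castRingHom ℂ) with hχ'def
  have hχ'app : ∀ x : ZMod p, χ' x = ((χ x : ℤ) : ℂ) := fun x => rfl
  have hχ1 : χ ≠ 1 := quadraticChar_ne_one (by rw [ZMod.ringChar_zmod_n]; exact_mod_cast hp2)
  have hχ'1 : χ' ≠ 1 :=
    (MulChar.ringHomComp_ne_one_iff (RingHom.injective_int (Int.castRingHom ℂ))).mpr hχ1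
  -- Gs c p as a sum over ZMod p
  have step1 : ∀ c : ℕ, Gs c p = ∑ r : ZMod p, ψp ((c : ZMod p) * r ^ 2) := by
    intro c
    unfold Gs
    refine Finset.sum_nbij' (fun r => ((r : ZMod p))) (fun x => x.val) ?_ ?_ ?_ ?_ ?_
    · intro r _; exact Finset.mem_univ _
    · intro x _; simpa using x.val_lt
    · intro r hr
      simp only [Finset.mem_range] at hr
      exact ZMod.val_natCast_of_lt hr
    · intro x _; exact ZMod.natCast_rightInverse x
    · intro r hr
      rw [show ((c : ZMod p) * ((r:ZMod p)) ^ 2) = (((c * r ^ 2 : ℕ) : ZMod p)) by push_cast; ring]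
      rw [AddChar.zmodChar_apply' hζp]
      rw [show ((c * r^2 : ℕ) : ℚ) / (p:ℚ) = ((c * r^2 : ℕ) : ℚ) * (1 / p) by ring]
      exact eC_nat_mul _ _
  -- character sum identity
  have step2 : ∀ d : ZMod p, d ≠ 0 →
      ∑ r : ZMod p, ψp (d * r ^ 2) = ((χ d : ℤ) : ℂ) * gaussSum χ' ψp := by
    intro d hd
    have fib := Finset.sum_fiberwise (univ : Finset (ZMod p)) (fun r => r ^ 2)
      (fun r => ψp (d * r ^ 2))
    rw [← fib]
    have inner : ∀ x : ZMod p,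
        ∑ r ∈ univ.filter (fun r => r ^ 2 = x), ψp (d * r ^ 2)
          = (((χ x : ℤ) : ℂ) + 1) * ψp (d * x) := by
      intro x
      have hcongr : ∀ r ∈ univ.filter (fun r : ZMod p => r ^ 2 = x),
          ψp (d * r ^ 2) = ψp (d * x) := by
        intro r hr
        simp only [Finset.mem_filter] at hr
        rw [hr.2]
      rw [Finset.sum_congr rfl hcongr, Finset.sum_const]
      have hcard : ((univ.filter (fun r : ZMod p => r ^ 2 = x)).card : ℤ) = χ x + 1 := by
        rw [← quadraticChar_card_sqrts (by rw [ZMod.ringChar_zmod_n]; exact_mod_cast hp2) x]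
        congr 1
        rw [Set.toFinset_setOf]
      rw [nsmul_eq_mul]
      congr 1
      exact_mod_cast congrArg (fun z : ℤ => ((z : ℂ))) hcard
    rw [Finset.sum_congr rfl (fun x _ => inner x)]
    have expand : ∑ x : ZMod p, (((χ x : ℤ) : ℂ) + 1) * ψp (d * x)
        = (∑ x : ZMod p, ((χ x : ℤ) : ℂ) * ψp (d * x)) + ∑ x : ZMod p, ψp (d * x) := by
      rw [← Finset.sum_add_distrib]
      congr 1; ext x; ring
    rw [expand]
    have hmulshift_ne : ψp.mulShift d ≠ 1 := hψprim hd
    have hzero : ∑ x : ZMod p, ψp (d * x) = 0 := by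
      have := AddChar.sum_eq_zero_of_ne_one hmulshift_ne
      simpa [AddChar.mulShift_apply] using this
    rw [hzero, add_zero]
    -- now the gauss sum with shift
    have hgs : ∑ x : ZMod p, ((χ x : ℤ) : ℂ) * ψp (d * x) = gaussSum χ' (ψp.mulShift d) := by
      unfold gaussSum
      refine Finset.sum_congr rfl fun x _ => ?_
      rw [AddChar.mulShift_apply, hχ'app]
    rw [hgs]
    set du : (ZMod p)ˣ := Units.mk0 d hd with hdu
    have hmul := gaussSum_mulShift χ' ψp du
    have hsq : χ' d * χ' d = 1 := by
      rw [hχ'app]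
      have := quadraticChar_sq_one hd
      rw [sq] at this
      rw [← Int.cast_mul]
      rw [show χ d * χ d = quadraticChar (ZMod p) d * quadraticChar (ZMod p) d from rfl, this]
      norm_num
    have hkey : χ' d * (χ' d * gaussSum χ' (ψp.mulShift d)) = χ' d * gaussSum χ' ψp := by
      rw [show ((du : ZMod p)) = d from rfl] at hmul
      rw [hmul]
    rw [← mul_assoc, hsq, one_mul] at hkey
    rw [hkey, hχ'app]
  have habs : ‖gaussSum χ' ψp‖ = Real.sqrt p := by
    have hsq := gaussSum_sq hχ'1 ((quadraticChar_isQuadratic (ZMod p)).comp _) hψprim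
    have hcard : (Fintype.card (ZMod p) : ℂ) = (p : ℂ) := by rw [ZMod.card]
    have habs2 : ‖gaussSum χ' ψp‖ ^ 2 = p := by
      rw [← norm_pow, hsq, hcard, norm_mul]
      have : ‖χ' (-1)‖ = 1 := by
        rw [hχ'app]
        rcases quadraticChar_dichotomy (a := (-1 : ZMod p))
          (neg_ne_zero.2 one_ne_zero) with h | h <;>
          rw [show quadraticChar (ZMod p) (-1) = χ (-1) from rfl] at h <;> rw [h] <;> simp
      rw [this, one_mul, Complex.norm_natCast]
    rw [← habs2, Real.sqrt_sq (norm_nonneg _)]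
  have hGs1 : Gs 1 p = gaussSum χ' ψp := by
    rw [step1 1, step2 ((1:ℕ):ZMod p) (by norm_num)]
    norm_num
  constructor
  · intro c hc
    have hcne : ((c : ZMod p)) ≠ 0 := by
      rw [Ne, ZMod.natCast_eq_zero_iff]
      exact hc
    rw [step1 c, step2 _ hcne, hGs1]
  · rw [hGs1]; exact habs

lemma Gs_main (p : ℕ) [Fact (Nat.Prime p)] (hp2 : p ≠ 2) :
    ∀ n c : ℕ, (n ≠ 0 → ¬ p ∣ c) →
    ‖Gs c (p^n)‖ = Real.sqrt p ^ n ∧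
    Gs c (p^n) = ((quadraticChar (ZMod p) (c : ZMod p) : ℤ) : ℂ) ^ n * Gs 1 (p^n) := by
  have hp : Nat.Prime p := Fact.out
  intro n
  induction n using Nat.strong_induction_on with
  | _ n ih =>
    match n with
    | 0 => intro c _; simp [Gs_triv]
    | 1 =>
      intro c hc
      have hc' := hc one_ne_zero
      obtain ⟨hratio, habs⟩ := Gs_prime p hp2
      have h1 := hratio c hc'
      have hcne : ((c : ZMod p)) ≠ 0 := by
        rw [Ne, ZMod.natCast_eq_zero_iff]; exact hc'
      have hchiabs : ‖(((quadraticChar (ZMod p) (c : ZMod p) : ℤ) : ℂ))‖ = 1 := by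
        rcases quadraticChar_dichotomy hcne with h | h <;> rw [h] <;> simp
      constructor
      · rw [pow_one, pow_one, h1, norm_mul, hchiabs, one_mul, habs]
      · rw [pow_one, pow_one]; exact h1
    | (m+2) =>
      intro c hc
      have hc' := hc (Nat.succ_ne_zero _)
      obtain ⟨ihabs, ihratio⟩ := ih m (by omega) c (fun _ => hc')
      obtain ⟨ihabs1, _⟩ := ih m (by omega) 1 (fun _ => hp.not_dvd_one)
      have hstep := Gs_step p c m hp hp2 hc'
      have hstep1 := Gs_step p 1 m hp hp2 hp.not_dvd_one
      have hchisq : (((quadraticChar (ZMod p) (c : ZMod p) : ℤ) : ℂ)) ^ 2 = 1 := by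
        have hcne : ((c : ZMod p)) ≠ 0 := by
          rw [Ne, ZMod.natCast_eq_zero_iff]; exact hc'
        rcases quadraticChar_dichotomy hcne with h | h <;> rw [h] <;> norm_num
      constructor
      · rw [hstep, norm_mul, Complex.norm_natCast, ihabs]
        rw [pow_add, Real.sq_sqrt (show (0:ℝ) ≤ (p:ℝ) by positivity)]
        ring
      · rw [hstep, ihratio, hstep1]
        rw [show m + 2 = m + 2 from rfl, pow_add, hchisq, mul_one]
        ring

end GaussSums

section MeasurePart
open scoped ENNReal

noncomputable def phiP (p : ℕ) [Fact (Nat.Prime p)] (n : ℕ) (y : ℚ_[p]) : ZMod (p^n) :=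
  if h : ‖y‖ ≤ 1 then PadicInt.toZModPow n (⟨y, h⟩ : ℤ_[p]) else 0

lemma phiP_mem_ball (p : ℕ) [Fact (Nat.Prime p)] (n : ℕ) (y : ℚ_[p]) (j : ZMod (p^n)) :
    y ∈ Metric.closedBall ((j.val : ℚ_[p])) ((p:ℝ)^(-(n:ℤ))) ↔ (‖y‖ ≤ 1 ∧ phiP p n y = j) := by
  have hp : Nat.Prime p := Fact.out
  haveI : NeZero (p^n) := ⟨pow_ne_zero n hp.ne_zero⟩
  have hr1 : ((p:ℝ))^(-(n:ℤ)) ≤ 1 := by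
    apply zpow_le_one_of_nonpos₀
    · exact_mod_cast hp.one_lt.le
    · omega
  have hjnorm : ‖((j.val : ℚ_[p]))‖ ≤ 1 := by
    have := Padic.norm_int_le_one (p := p) (j.val : ℤ)
    simpa using this
  constructor
  · intro hy
    rw [Metric.mem_closedBall, dist_eq_norm] at hy
    have hynorm : ‖y‖ ≤ 1 := by
      calc ‖y‖ = ‖(y - (j.val : ℚ_[p])) + (j.val : ℚ_[p])‖ := by ring_nf
      _ ≤ max ‖y - (j.val : ℚ_[p])‖ ‖((j.val : ℚ_[p]))‖ := Padic.nonarchimedean _ _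
      _ ≤ 1 := max_le (le_trans hy hr1) hjnorm
    refine ⟨hynorm, ?_⟩
    rw [phiP, dif_pos hynorm]
    set Y : ℤ_[p] := ⟨y, hynorm⟩ with hYdef
    set J : ℤ_[p] := ((j.val : ℕ) : ℤ_[p]) with hJdef
    have hker : Y - J ∈ RingHom.ker (PadicInt.toZModPow (p := p) n) := by
      rw [PadicInt.ker_toZModPow, ← PadicInt.norm_le_pow_iff_mem_span_pow]
      have hco : ((Y - J : ℤ_[p]) : ℚ_[p]) = y - (j.val : ℚ_[p]) := by
        rw [PadicInt.coe_sub, hYdef, hJdef]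
        push_cast
        ring
      rw [PadicInt.norm_def, hco]
      exact hy
    rw [RingHom.sub_mem_ker_iff] at hker
    rw [hker, hJdef, map_natCast]
    exact ZMod.natCast_rightInverse j
  · rintro ⟨hynorm, hphi⟩
    rw [phiP, dif_pos hynorm] at hphi
    set Y : ℤ_[p] := ⟨y, hynorm⟩ with hYdef
    set J : ℤ_[p] := ((j.val : ℕ) : ℤ_[p]) with hJdef
    have hker : Y - J ∈ RingHom.ker (PadicInt.toZModPow (p := p) n) := by
      rw [RingHom.sub_mem_ker_iff, hphi, hJdef, map_natCast]
      exact (ZMod.natCast_rightInverse j).symm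
    rw [PadicInt.ker_toZModPow, ← PadicInt.norm_le_pow_iff_mem_span_pow] at hker
    rw [PadicInt.norm_def] at hker
    have hco : ((Y - J : ℤ_[p]) : ℚ_[p]) = y - (j.val : ℚ_[p]) := by
      rw [PadicInt.coe_sub, hYdef, hJdef]
      push_cast
      ring
    rw [hco] at hker
    rw [Metric.mem_closedBall, dist_eq_norm]
    exact hker

lemma integral_locally_const (p : ℕ) [Fact (Nat.Prime p)]
    [MeasurableSpace ℚ_[p]] [BorelSpace ℚ_[p]]
    (μ : Measure ℚ_[p]) [μ.IsAddLeftInvariant]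
    (hμ : μ {x : ℚ_[p] | ‖x‖ ≤ 1} = 1) (n : ℕ) (F : ZMod (p^n) → ℂ) :
    ∫ y in {y : ℚ_[p] | ‖y‖ ≤ 1}, F (phiP p n y) ∂μ = ((p:ℂ)^n)⁻¹ * ∑ j, F j := by
  have hp : Nat.Prime p := Fact.out
  haveI : NeZero (p^n) := ⟨pow_ne_zero n hp.ne_zero⟩
  set S : Set ℚ_[p] := {y : ℚ_[p] | ‖y‖ ≤ 1} with hSdef
  set r : ℝ := (p:ℝ)^(-(n:ℤ)) with hrdef
  set A : ZMod (p^n) → Set ℚ_[p] := fun j => Metric.closedBall ((j.val : ℚ_[p])) r with hAdef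
  have hAmeas : ∀ j, MeasurableSet (A j) := fun j => measurableSet_closedBall
  have hAsub : ∀ j, A j ⊆ S := by
    intro j y hy
    exact ((phiP_mem_ball p n y j).1 hy).1
  have hdisj : Pairwise (Function.onFun Disjoint A) := by
    intro j k hjk
    rw [Function.onFun, Set.disjoint_left]
    intro y hyj hyk
    exact hjk (((phiP_mem_ball p n y j).1 hyj).2.symm.trans ((phiP_mem_ball p n y k).1 hyk).2)
  have hunion : (⋃ j, A j) = S := by
    apply Set.Subset.antisymm
    · exact Set.iUnion_subset hAsub
    · intro y hy
      exact Set.mem_iUnion.2 ⟨phiP p n y, (phiP_mem_ball p n y _).2 ⟨hy, rfl⟩⟩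
  set B : Set ℚ_[p] := Metric.closedBall (0 : ℚ_[p]) r with hBdef
  have hAB : ∀ j, μ (A j) = μ B := by
    intro j
    have : A j = (fun h => (-(j.val : ℚ_[p])) + h) ⁻¹' B := by
      ext y
      simp only [hAdef, hBdef, Set.mem_preimage, Metric.mem_closedBall, dist_eq_norm, sub_zero]
      rw [show (-(j.val : ℚ_[p]) + y) = y - (j.val : ℚ_[p]) by ring]
    rw [this, measure_preimage_add]
  have hcard : Fintype.card (ZMod (p^n)) = p^n := ZMod.card _
  have hsum : (((p^n : ℕ)) : ℝ≥0∞) * μ B = 1 := by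
    have h1 : μ S = ∑' j : ZMod (p^n), μ (A j) := by
      rw [← hunion]; exact measure_iUnion hdisj hAmeas
    rw [tsum_fintype] at h1
    have h2 : ∑ j : ZMod (p^n), μ (A j) = (p^n : ℕ) • μ B := by
      rw [Finset.sum_congr rfl (fun j _ => hAB j), Finset.sum_const, Finset.card_univ, hcard]
    rw [h2, hμ] at h1
    rw [nsmul_eq_mul] at h1
    exact h1.symm
  have hBfin : μ B ≠ ⊤ := by
    intro h
    rw [h, ENNReal.mul_top (Nat.cast_ne_zero.2 (pow_ne_zero n hp.ne_zero))] at hsum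
    exact ENNReal.top_ne_one hsum
  have hpn0 : ((p:ℝ))^n ≠ 0 := pow_ne_zero n (by exact_mod_cast hp.ne_zero)
  have hBtoReal : (μ B).toReal = ((p:ℝ)^n)⁻¹ := by
    have hh := congrArg ENNReal.toReal hsum
    rw [ENNReal.toReal_mul, ENNReal.toReal_one, ENNReal.toReal_natCast] at hh
    push_cast at hh
    field_simp
    linear_combination hh
  have hAfin : ∀ j, μ (A j) ≠ ⊤ := fun j => by rw [hAB]; exact hBfin
  have hint : ∀ j, IntegrableOn (fun y => F (phiP p n y)) (A j) μ := by
    intro j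
    have heq : Set.EqOn (fun y => F (phiP p n y)) (fun _ => F j) (A j) := by
      intro y hy
      simp only
      rw [((phiP_mem_ball p n y j).1 hy).2]
    rw [integrableOn_congr_fun heq (hAmeas j)]
    exact integrableOn_const (hAfin j)
  have hsplit : ∫ y in S, F (phiP p n y) ∂μ = ∑ j, ∫ y in A j, F (phiP p n y) ∂μ := by
    rw [← hunion]
    exact integral_iUnion_fintype hAmeas hdisj hint
  rw [hsplit]
  have hterm : ∀ j, ∫ y in A j, F (phiP p n y) ∂μ = ((p:ℝ)^n)⁻¹ • F j := by
    intro j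
    have heq : Set.EqOn (fun y => F (phiP p n y)) (fun _ => F j) (A j) := by
      intro y hy
      simp only
      rw [((phiP_mem_ball p n y j).1 hy).2]
    rw [setIntegral_congr_fun (hAmeas j) heq, setIntegral_const, measureReal_def, hAB, hBtoReal]
  rw [Finset.sum_congr rfl (fun j _ => hterm j), ← Finset.smul_sum]
  rw [Complex.real_smul]
  push_cast
  ring

end MeasurePart

section Helpers
open Finset

lemma sum_zmod_eq_Gs (p : ℕ) [Fact (Nat.Prime p)] (n c : ℕ) :
    ∑ j : ZMod (p^n), eC (((c * j.val^2 : ℕ) : ℚ) / ((p^n : ℕ) : ℚ)) = Gs c (p^n) := by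
  have hp : Nat.Prime p := Fact.out
  haveI : NeZero (p^n) := ⟨pow_ne_zero n hp.ne_zero⟩
  unfold Gs
  refine Finset.sum_nbij' (fun j : ZMod (p^n) => j.val) (fun r => ((r : ZMod (p^n)))) ?_ ?_ ?_ ?_ ?_
  · intro j _
    simpa using j.val_lt
  · intro r _; exact Finset.mem_univ _
  · intro j _; exact ZMod.natCast_rightInverse j
  · intro r hr
    simp only [Finset.mem_range] at hr
    exact ZMod.val_natCast_of_lt hr
  · intro j _; rfl

lemma padicRes_one (p : ℕ) [Fact (Nat.Prime p)] : padicRes p 1 = 1 := by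
  rw [padicRes, dif_pos (le_of_eq (norm_one))]
  have h1 : (⟨(1:ℚ_[p]), le_of_eq norm_one⟩ : ℤ_[p]) = (1 : ℤ_[p]) :=
    Subtype.ext (by rw [PadicInt.coe_one])
  rw [h1]
  exact map_one _

end Helpers

theorem statement_3 (p : ℕ) [Fact (Nat.Prime p)] (hp : p ≠ 2)
    [MeasurableSpace ℚ_[p]] [BorelSpace ℚ_[p]]
    (μ : Measure ℚ_[p]) [μ.IsAddLeftInvariant]
    (hμ : μ {x : ℚ_[p] | ‖x‖ ≤ 1} = 1)
    (ψ : ℚ_[p] → ℂ) (hψ : IsStdChar p ψ)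
    (u : ℚ_[p]) (hu : ‖u‖ = 1)
    (t : ℚ_[p]) (ht : ‖t‖ ≤ 1) (ht0 : t ≠ 0) :
    ‖∫ y in {y : ℚ_[p] | ‖y‖ ≤ 1}, ψ (u * y ^ 2 / t) ∂μ‖ = Real.sqrt ‖t‖ ∧
    (∫ y in {y : ℚ_[p] | ‖y‖ ≤ 1}, ψ (u * y ^ 2 / t) ∂μ)
      = ((quadraticChar (ZMod p) (padicRes p u) : ℤ) : ℂ) ^ t.valuation *
        ∫ y in {y : ℚ_[p] | ‖y‖ ≤ 1}, ψ (y ^ 2 / t) ∂μ := by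
  have hpp : Nat.Prime p := Fact.out
  have hp2 : p ≠ 2 := hp
  have hψval := hψ.2
  have hp1R : (1:ℝ) < (p:ℝ) := by exact_mod_cast hpp.one_lt
  have hp0R : (0:ℝ) ≤ (p:ℝ) := by positivity
  -- valuation nonneg
  have hval0 : 0 ≤ t.valuation := by
    by_contra h
    push_neg at h
    have h1 : (1:ℝ) < (p:ℝ) ^ (-t.valuation) := one_lt_zpow₀ hp1R (by omega)
    rw [← Padic.norm_eq_zpow_neg_valuation ht0] at h1
    linarith
  set n : ℕ := t.valuation.toNat with hn
  have hvn : t.valuation = (n : ℤ) := (Int.toNat_of_nonneg hval0).symm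
  have htnorm : ‖t‖ = (p:ℝ) ^ (-(n:ℤ)) := by rw [Padic.norm_eq_zpow_neg_valuation ht0, hvn]
  have hpn0 : ((p:ℚ_[p]))^n ≠ 0 := pow_ne_zero n (by exact_mod_cast hpp.ne_zero)
  set w : ℚ_[p] := t / (p:ℚ_[p])^n with hw
  have hw0 : w ≠ 0 := div_ne_zero ht0 hpn0
  have hwnorm : ‖w‖ = 1 := by
    rw [hw, norm_div, htnorm, Padic.norm_p_pow]
    exact div_self (by positivity)
  have hSmeas : MeasurableSet {y : ℚ_[p] | ‖y‖ ≤ 1} := by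
    have : {y : ℚ_[p] | ‖y‖ ≤ 1} = Metric.closedBall (0 : ℚ_[p]) 1 := by
      ext y; simp [Metric.mem_closedBall, dist_eq_norm]
    rw [this]
    exact measurableSet_closedBall
  -- the key computation, for a general numerator u0 of norm 1
  have key : ∀ u0 : ℚ_[p], ‖u0‖ = 1 → ∃ c : ℕ,
      (n ≠ 0 → (¬ p ∣ c ∧ ((c : ZMod p) = padicRes p u0 * padicRes p w⁻¹))) ∧
      (∫ y in {y : ℚ_[p] | ‖y‖ ≤ 1}, ψ (u0 * y ^ 2 / t) ∂μ)
        = ((p:ℂ)^n)⁻¹ * Gs c (p^n) := by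
    intro u0 hu0
    have hanorm : ‖u0 / w‖ = 1 := by rw [norm_div, hu0, hwnorm, div_one]
    set A : ℤ_[p] := ⟨u0 / w, le_of_eq hanorm⟩ with hA
    set c : ℕ := A.appr n with hc
    have happr : ‖(u0 / w) - (c : ℚ_[p])‖ ≤ (p:ℝ) ^ (-(n:ℤ)) := by
      have h1 := PadicInt.appr_spec n A
      rw [← PadicInt.norm_le_pow_iff_mem_span_pow] at h1
      rw [PadicInt.norm_def] at h1
      have hco : ((A - ((c : ℕ) : ℤ_[p]) : ℤ_[p]) : ℚ_[p]) = (u0 / w) - (c : ℚ_[p]) := by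
        rw [PadicInt.coe_sub, hA]
        push_cast
        ring
      rwa [hco] at h1
    refine ⟨c, ?_, ?_⟩
    · intro hn0
      have hAunit : IsUnit A := PadicInt.isUnit_iff.2 (by rw [hA]; exact hanorm)
      have htoZMod : ((c : ZMod p)) = PadicInt.toZMod A := by
        have hker : A - ((c : ℕ) : ℤ_[p]) ∈ RingHom.ker (PadicInt.toZMod (p := p)) := by
          rw [PadicInt.ker_toZMod, PadicInt.maximalIdeal_eq_span_p]
          have h1 := PadicInt.appr_spec n A
          refine Ideal.span_singleton_le_span_singleton.2 ?_ h1
          exact dvd_pow_self _ hn0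
        rw [RingHom.sub_mem_ker_iff] at hker
        rw [hker, map_natCast]
      constructor
      · intro hdvd
        have hzero : ((c : ZMod p)) = 0 := (ZMod.natCast_eq_zero_iff c p).2 hdvd
        rw [htoZMod] at hzero
        exact (hAunit.map (PadicInt.toZMod (p := p))).ne_zero hzero
      · rw [htoZMod]
        have hwinv : ‖w⁻¹‖ = 1 := by rw [norm_inv, hwnorm, inv_one]
        rw [padicRes, dif_pos (le_of_eq hu0), padicRes, dif_pos (le_of_eq hwinv)]
        set U : ℤ_[p] := ⟨u0, le_of_eq hu0⟩ with hU
        set W : ℤ_[p] := ⟨w⁻¹, le_of_eq hwinv⟩ with hW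
        have hAco : ((A : ℚ_[p])) = ((U * W : ℤ_[p]) : ℚ_[p]) := by
          rw [PadicInt.coe_mul]
          show u0 / w = u0 * w⁻¹
          rw [div_eq_mul_inv]
        have hAeq : A = U * W := Subtype.ext hAco
        rw [hAeq, map_mul]
    · -- the integral computation
      have hcongr : Set.EqOn (fun y => ψ (u0 * y ^ 2 / t))
          (fun y => eC (((c * (phiP p n y).val^2 : ℕ) : ℚ) / ((p^n : ℕ) : ℚ)))
          {y : ℚ_[p] | ‖y‖ ≤ 1} := by
        intro y hy
        simp only [Set.mem_setOf_eq] at hy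
        set j : ZMod (p^n) := phiP p n y with hj
        have hball : y ∈ Metric.closedBall ((j.val : ℚ_[p])) ((p:ℝ)^(-(n:ℤ))) :=
          (phiP_mem_ball p n y j).2 ⟨hy, rfl⟩
        rw [Metric.mem_closedBall, dist_eq_norm] at hball
        set b : ℚ_[p] := (j.val : ℚ_[p]) with hb
        have hbnorm : ‖b‖ ≤ 1 := by
          have := Padic.norm_int_le_one (p := p) (j.val : ℤ)
          simpa [hb] using this
        have harg : u0 * y ^ 2 / t = (u0 / w) * y ^ 2 / (p:ℚ_[p])^n := by
          rw [hw]
          field_simp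
        have hm : ‖u0 * y ^ 2 / t - (((c * j.val^2 : ℕ) : ℤ) : ℚ_[p]) / (p:ℚ_[p])^n‖ ≤ 1 := by
          rw [harg]
          rw [div_sub_div_same, norm_div, Padic.norm_p_pow]
          rw [show ((((c * j.val^2 : ℕ) : ℤ)) : ℚ_[p]) = (c : ℚ_[p]) * b^2 by push_cast [hb]; ring]
          have hdecomp : (u0 / w) * y ^ 2 - (c : ℚ_[p]) * b^2
              = (u0 / w) * ((y - b) * (y + b)) + ((u0 / w) - (c : ℚ_[p])) * b^2 := by ring
          rw [hdecomp]
          have h1 : ‖(u0 / w) * ((y - b) * (y + b))‖ ≤ (p:ℝ)^(-(n:ℤ)) := by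
            rw [norm_mul, norm_mul, hanorm, one_mul]
            have hyb : ‖y + b‖ ≤ 1 := le_trans (Padic.nonarchimedean _ _) (max_le hy hbnorm)
            calc ‖y - b‖ * ‖y + b‖ ≤ ((p:ℝ)^(-(n:ℤ))) * 1 :=
                  mul_le_mul hball hyb (norm_nonneg _) (by positivity)
            _ = (p:ℝ)^(-(n:ℤ)) := mul_one _
          have h2 : ‖((u0 / w) - (c : ℚ_[p])) * b^2‖ ≤ (p:ℝ)^(-(n:ℤ)) := by
            rw [norm_mul]
            calc ‖(u0 / w) - (c : ℚ_[p])‖ * ‖b^2‖ ≤ ((p:ℝ)^(-(n:ℤ))) * 1 := by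
                  apply mul_le_mul happr ?_ (norm_nonneg _) (by positivity)
                  rw [norm_pow]
                  exact pow_le_one₀ (norm_nonneg _) hbnorm
            _ = (p:ℝ)^(-(n:ℤ)) := mul_one _
          have h3 : ‖(u0 / w) * ((y - b) * (y + b)) + ((u0 / w) - (c : ℚ_[p])) * b^2‖
              ≤ (p:ℝ)^(-(n:ℤ)) := le_trans (Padic.nonarchimedean _ _) (max_le h1 h2)
          rw [div_le_one (by positivity)]
          exact h3
        have hpsi := hψval (u0 * y ^ 2 / t) ((c * j.val^2 : ℕ) : ℤ) n hm
        show ψ (u0 * y ^ 2 / t) = eC (((c * j.val^2 : ℕ) : ℚ) / ((p^n : ℕ) : ℚ))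
        rw [hpsi]
        unfold eC
        congr 1
        push_cast
        ring
      rw [setIntegral_congr_fun hSmeas hcongr]
      rw [integral_locally_const p μ hμ n
        (fun j => eC (((c * j.val^2 : ℕ) : ℚ) / ((p^n : ℕ) : ℚ)))]
      rw [sum_zmod_eq_Gs]
  obtain ⟨c, hcrel, hint1⟩ := key u hu
  obtain ⟨c', hcrel', hint2⟩ := key 1 norm_one
  have hint2' : (∫ y in {y : ℚ_[p] | ‖y‖ ≤ 1}, ψ (y ^ 2 / t) ∂μ)
      = ((p:ℂ)^n)⁻¹ * Gs c' (p^n) := by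
    rw [← hint2]
    refine setIntegral_congr_fun hSmeas ?_
    intro y _
    show ψ (y ^ 2 / t) = ψ (1 * y ^ 2 / t)
    rw [one_mul]
  have hGc := Gs_main p hp2 n c (fun h => (hcrel h).1)
  have hGc' := Gs_main p hp2 n c' (fun h => (hcrel' h).1)
  constructor
  · rw [hint1, norm_mul, norm_inv, norm_pow, Complex.norm_natCast, hGc.1, htnorm]
    have hsqrtmul : Real.sqrt p ^ n * Real.sqrt p ^ n = (p:ℝ)^n := by
      rw [← mul_pow, Real.mul_self_sqrt hp0R]
    have hzp : ((p:ℝ)) ^ (-(n:ℤ)) = ((p:ℝ)^n)⁻¹ := by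
      rw [zpow_neg, zpow_natCast]
    rw [hzp, Real.sqrt_inv]
    have hsq : Real.sqrt ((p:ℝ)^n) = Real.sqrt p ^ n := by
      rw [show ((p:ℝ))^n = (Real.sqrt p ^ n)^2 by rw [← hsqrtmul]; ring]
      exact Real.sqrt_sq (by positivity)
    rw [hsq]
    have hne : Real.sqrt p ^ n ≠ 0 := by
      apply pow_ne_zero
      positivity
    field_simp
    linear_combination hsqrtmul
  · rw [hint1, hint2', hGc.2, hGc'.2, hvn, zpow_natCast]
    by_cases hn0 : n = 0
    · rw [hn0]
      norm_num [Gs_triv]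
    · obtain ⟨hcd, hcz⟩ := hcrel hn0
      obtain ⟨hcd', hcz'⟩ := hcrel' hn0
      rw [hcz, hcz', padicRes_one, one_mul]
      rw [map_mul]
      push_cast
      ring
end
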